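/- For every natural number n ≥ 1, the number of binary trees with n internal nodes (equivalently, full binary trees with n+1 leaves) equals the number of Young diagrams contained in the staircase Young diagram S(n-1). -/

import Mathlib

/-- Monotone staircase-avoiding functions: `g : Fin n → Fin (n+1)` monotone with `i < g i`. -/
def Gfun (n : ℕ) : Type :=
  {g : Fin n → Fin (n + 1) //
    (∀ i j : Fin n, i ≤ j → (g i : ℕ) ≤ (g j : ℕ)) ∧ ∀ i : Fin n, (i : ℕ) < (g i : ℕ)}

instance (n : ℕ) : Fintype (Gfun n) := by unfold Gfun; infer_instance
instance (n : ℕ) : DecidableEq (Gfun n) := by unfold Gfun; infer_instance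

lemma cardG_zero : Fintype.card (Gfun 0) = 1 := by
  have e : Gfun 0 ≃ Unit :=
    { toFun := fun _ => ()
      invFun := fun _ => ⟨Fin.elim0, fun i => i.elim0, fun i => i.elim0⟩
      left_inv := fun g => by apply Subtype.ext; funext i; exact i.elim0
      right_inv := fun _ => rfl }
  rw [Fintype.card_congr e]; simp

namespace Gfun

variable {n : ℕ}

/-- Extension of `g` to all of `ℕ`. -/
def gg (g : Gfun (n + 1)) (k : ℕ) : ℕ :=
  if h : k < n + 1 then (g.1 ⟨k, h⟩ : ℕ) else k + 1

lemma lt_gg (g : Gfun (n + 1)) (k : ℕ) : k < gg g k := by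
  unfold gg; split
  · exact g.2.2 ⟨k, by omega⟩
  · omega

lemma gg_le (g : Gfun (n + 1)) (k : ℕ) (h : k ≤ n) : gg g k ≤ n + 1 := by
  unfold gg
  rw [dif_pos (by omega)]
  exact Nat.lt_succ_iff.mp (g.1 _).is_lt

lemma gg_mono (g : Gfun (n + 1)) : Monotone (gg g) := by
  intro a b hab
  unfold gg
  split <;> split
  · exact g.2.1 _ _ (by exact hab)
  · calc (g.1 ⟨a, _⟩ : ℕ) ≤ n + 1 := Nat.lt_succ_iff.mp (g.1 _).is_lt
      _ ≤ b + 1 := by omega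
  · omega
  · omega

lemma exists_fix (g : Gfun (n + 1)) : ∃ k, gg g k = k + 1 := by
  refine ⟨n, ?_⟩
  have h1 := lt_gg g n
  have h2 := gg_le g n le_rfl
  omega

/-- The "first return" index of `g`. -/
def fr (g : Gfun (n + 1)) : ℕ := Nat.find (exists_fix g)

lemma gg_fr (g : Gfun (n + 1)) : gg g (fr g) = fr g + 1 := Nat.find_spec (exists_fix g)

lemma fr_le (g : Gfun (n + 1)) : fr g ≤ n := by
  by_contra h
  have := Nat.find_min' (exists_fix g) (show gg g n = n + 1 by
    have h1 := lt_gg g n; have h2 := gg_le g n le_rfl; omega)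
  exact h (by simpa [fr] using this)

lemma gg_of_lt_fr (g : Gfun (n + 1)) {k : ℕ} (h : k < fr g) : k + 2 ≤ gg g k := by
  have h1 := lt_gg g k
  have h2 : gg g k ≠ k + 1 := Nat.find_min (exists_fix g) h
  omega

lemma gg_le_of_le_fr (g : Gfun (n + 1)) {k : ℕ} (h : k ≤ fr g) : gg g k ≤ fr g + 1 := by
  calc gg g k ≤ gg g (fr g) := gg_mono g h
    _ = fr g + 1 := gg_fr g

end Gfun

namespace Gfun

variable {n : ℕ}

/-- Value function for gluing two smaller `Gfun`s. -/
def glueVal (j : ℕ) (p : Gfun j) (q : Gfun (n - j)) (k : ℕ) : ℕ :=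
  if h : k < j then (p.1 ⟨k, h⟩ : ℕ) + 1
  else if k = j then j + 1
  else if h2 : k - j - 1 < n - j then (q.1 ⟨k - j - 1, h2⟩ : ℕ) + j + 1
  else k + 1

lemma glueVal_lt {j : ℕ} (p : Gfun j) (q : Gfun (n - j)) {k : ℕ} (h : k < j) :
    glueVal j p q k = (p.1 ⟨k, h⟩ : ℕ) + 1 := by simp [glueVal, h]

lemma glueVal_eq {j : ℕ} (p : Gfun j) (q : Gfun (n - j)) : glueVal j p q j = j + 1 := by
  simp [glueVal]

lemma glueVal_gt {j : ℕ} (p : Gfun j) (q : Gfun (n - j)) {k : ℕ} (h : j < k)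
    (h2 : k - j - 1 < n - j) :
    glueVal j p q k = (q.1 ⟨k - j - 1, h2⟩ : ℕ) + j + 1 := by
  rw [glueVal, dif_neg (by omega), if_neg (by omega), dif_pos h2]

lemma glueVal_bounds {j : ℕ} (hj : j ≤ n) (p : Gfun j) (q : Gfun (n - j)) {k : ℕ} (hk : k ≤ n) :
    k < glueVal j p q k ∧ glueVal j p q k ≤ n + 1 := by
  rcases lt_trichotomy k j with h | h | h
  · rw [glueVal_lt p q h]
    have h1 := (p.1 ⟨k, h⟩).is_lt
    have h2 : k < (p.1 ⟨k, h⟩ : ℕ) := p.2.2 ⟨k, h⟩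
    omega
  · subst h; rw [glueVal_eq]; omega
  · have h2 : k - j - 1 < n - j := by omega
    rw [glueVal_gt p q h h2]
    have h1 := (q.1 ⟨k - j - 1, h2⟩).is_lt
    have h3 : k - j - 1 < (q.1 ⟨k - j - 1, h2⟩ : ℕ) := q.2.2 ⟨k - j - 1, h2⟩
    omega

lemma glueVal_mono {j : ℕ} (hj : j ≤ n) (p : Gfun j) (q : Gfun (n - j)) {a b : ℕ}
    (hab : a ≤ b) (hb : b ≤ n) : glueVal j p q a ≤ glueVal j p q b := by
  rcases lt_trichotomy b j with h | h | h
  · have ha : a < j := by omega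
    rw [glueVal_lt p q ha, glueVal_lt p q h]
    have h1 : (p.1 ⟨a, ha⟩ : ℕ) ≤ (p.1 ⟨b, h⟩ : ℕ) := p.2.1 ⟨a, ha⟩ ⟨b, h⟩ hab
    omega
  · rcases eq_or_lt_of_le hab with rfl | ha
    · exact le_rfl
    · rw [h] at ha ⊢
      rw [glueVal_lt p q ha, glueVal_eq]
      have := (p.1 ⟨a, ha⟩).is_lt
      omega
  · have h2 : b - j - 1 < n - j := by omega
    rw [glueVal_gt p q h h2]
    rcases lt_trichotomy a j with ha | ha | ha
    · rw [glueVal_lt p q ha]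
      have := (p.1 ⟨a, ha⟩).is_lt
      omega
    · rw [ha, glueVal_eq]; omega
    · have ha2 : a - j - 1 < n - j := by omega
      rw [glueVal_gt p q ha ha2]
      have h3 : (q.1 ⟨a - j - 1, ha2⟩ : ℕ) ≤ (q.1 ⟨b - j - 1, h2⟩ : ℕ) :=
        q.2.1 ⟨a - j - 1, ha2⟩ ⟨b - j - 1, h2⟩ (by show a - j - 1 ≤ b - j - 1; omega)
      omega

/-- Glue two smaller `Gfun`s into one: inverse of the first-return decomposition. -/
def glue (j : ℕ) (hj : j ≤ n) (p : Gfun j) (q : Gfun (n - j)) : Gfun (n + 1) :=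
  ⟨fun i => ⟨glueVal j p q i, by
      have := (glueVal_bounds hj p q (Nat.lt_succ_iff.mp i.is_lt)).2; omega⟩,
    fun a b hab => glueVal_mono hj p q (by exact hab) (Nat.lt_succ_iff.mp b.is_lt),
    fun a => (glueVal_bounds hj p q (Nat.lt_succ_iff.mp a.is_lt)).1⟩

lemma gg_glue {j : ℕ} (hj : j ≤ n) (p : Gfun j) (q : Gfun (n - j)) {k : ℕ} (hk : k ≤ n) :
    gg (glue j hj p q) k = glueVal j p q k := by
  rw [gg, dif_pos (by omega)]; rfl

lemma fr_glue {j : ℕ} (hj : j ≤ n) (p : Gfun j) (q : Gfun (n - j)) :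
    fr (glue j hj p q) = j := by
  have hQ : gg (glue j hj p q) j = j + 1 := by rw [gg_glue hj p q hj, glueVal_eq]
  have h1 : fr (glue j hj p q) ≤ j := Nat.find_min' _ hQ
  rcases eq_or_lt_of_le h1 with h | h
  · exact h
  · exfalso
    have h2 := gg_fr (glue j hj p q)
    rw [gg_glue hj p q (by omega), glueVal_lt p q h] at h2
    have h3 : fr (glue j hj p q) < (p.1 ⟨fr (glue j hj p q), h⟩ : ℕ) :=
      p.2.2 ⟨fr (glue j hj p q), h⟩
    omega

end Gfun

namespace Gfun

variable {n : ℕ}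

/-- First component of the first-return decomposition. -/
def split1 (g : Gfun (n + 1)) (j : ℕ) (hg : fr g = j) : Gfun j :=
  ⟨fun i => ⟨gg g i - 1, by
      have h1 : gg g (i : ℕ) ≤ j + 1 := by
        have := gg_le_of_le_fr g (k := (i : ℕ)) (by have := i.is_lt; omega); omega
      omega⟩,
    by
      intro a b hab
      have := gg_mono g (show (a : ℕ) ≤ (b : ℕ) from hab)
      simp only
      omega,
    by
      intro a
      have h1 : (a : ℕ) + 2 ≤ gg g a := gg_of_lt_fr g (by have := a.is_lt; omega)
      simp only
      omega⟩

/-- Second component of the first-return decomposition. -/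
def split2 (g : Gfun (n + 1)) (j : ℕ) (hj : j ≤ n) (hg : fr g = j) : Gfun (n - j) :=
  ⟨fun t => ⟨gg g (j + 1 + t) - (j + 1), by
      have h1 : gg g (j + 1 + (t : ℕ)) ≤ n + 1 := gg_le g _ (by have := t.is_lt; omega)
      omega⟩,
    by
      intro a b hab
      have := gg_mono g (show j + 1 + (a : ℕ) ≤ j + 1 + (b : ℕ) by
        have : (a : ℕ) ≤ (b : ℕ) := hab; omega)
      simp only
      omega,
    by
      intro a
      have h1 := lt_gg g (j + 1 + (a : ℕ))
      simp only
      omega⟩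

lemma glueVal_split (g : Gfun (n + 1)) (j : ℕ) (hj : j ≤ n) (hg : fr g = j) {k : ℕ}
    (hk : k ≤ n) : glueVal j (split1 g j hg) (split2 g j hj hg) k = gg g k := by
  rcases lt_trichotomy k j with h | h | h
  · rw [glueVal_lt _ _ h]
    have h1 : k + 2 ≤ gg g k := gg_of_lt_fr g (by omega)
    show gg g k - 1 + 1 = gg g k
    omega
  · rw [h, glueVal_eq]
    have := gg_fr g
    rw [hg] at this
    omega
  · have h2 : k - j - 1 < n - j := by omega
    rw [glueVal_gt _ _ h h2]
    have h3 : ((split2 g j hj hg).1 ⟨k - j - 1, h2⟩ : ℕ) = gg g (j + 1 + (k - j - 1)) - (j + 1) :=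
      rfl
    have hk' : j + 1 + (k - j - 1) = k := by omega
    rw [hk'] at h3
    have := lt_gg g k
    omega

/-- The first-return decomposition as an equivalence on fibers. -/
def fiberEquiv (j : ℕ) (hj : j ≤ n) :
    {g : Gfun (n + 1) // fr g = j} ≃ Gfun j × Gfun (n - j) where
  toFun g := (split1 g.1 j g.2, split2 g.1 j hj g.2)
  invFun pq := ⟨glue j hj pq.1 pq.2, fr_glue hj pq.1 pq.2⟩
  left_inv g := by
    apply Subtype.ext
    apply Subtype.ext
    funext i
    apply Fin.ext
    show glueVal j _ _ (i : ℕ) = ((g.1).1 i : ℕ)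
    rw [glueVal_split g.1 j hj g.2 (Nat.lt_succ_iff.mp i.is_lt)]
    rw [gg, dif_pos i.is_lt]
  right_inv pq := by
    obtain ⟨p, q⟩ := pq
    have hfr := fr_glue hj p q
    refine Prod.ext ?_ ?_
    · apply Subtype.ext
      funext i
      apply Fin.ext
      have h1 : (((glue j hj p q).split1 j hfr).1 i : ℕ) = gg (glue j hj p q) i - 1 := rfl
      have h2 : gg (glue j hj p q) i = glueVal j p q i :=
        gg_glue hj p q (by have := i.is_lt; omega)
      have h3 : glueVal j p q i = (p.1 ⟨(i : ℕ), i.is_lt⟩ : ℕ) + 1 := glueVal_lt p q i.is_lt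
      have h4 : (⟨(i : ℕ), i.is_lt⟩ : Fin j) = i := Fin.ext rfl
      rw [h4] at h3
      show (((glue j hj p q).split1 j hfr).1 i : ℕ) = (p.1 i : ℕ)
      omega
    · apply Subtype.ext
      funext t
      apply Fin.ext
      have ht : j + 1 + (t : ℕ) ≤ n := by have := t.is_lt; omega
      have h2 : j + 1 + (t : ℕ) - j - 1 < n - j := by have := t.is_lt; omega
      have h1 : (((glue j hj p q).split2 j hj hfr).1 t : ℕ)
          = gg (glue j hj p q) (j + 1 + (t : ℕ)) - (j + 1) := rfl
      have h5 : gg (glue j hj p q) (j + 1 + (t : ℕ)) = glueVal j p q (j + 1 + (t : ℕ)) :=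
        gg_glue hj p q ht
      have h3 : glueVal j p q (j + 1 + (t : ℕ))
          = (q.1 ⟨j + 1 + (t : ℕ) - j - 1, h2⟩ : ℕ) + j + 1 := glueVal_gt p q (by omega) h2
      have h4 : (⟨j + 1 + (t : ℕ) - j - 1, h2⟩ : Fin (n - j)) = t := Fin.ext (by show j + 1 + (t : ℕ) - j - 1 = (t : ℕ); omega)
      rw [h4] at h3
      show (((glue j hj p q).split2 j hj hfr).1 t : ℕ) = (q.1 t : ℕ)
      omega

lemma cardG_succ :
    Fintype.card (Gfun (n + 1)) =
      ∑ j ∈ Finset.range (n + 1), Fintype.card (Gfun j) * Fintype.card (Gfun (n - j)) := by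
  rw [← Finset.card_univ]
  rw [Finset.card_eq_sum_card_fiberwise (f := fr) (t := Finset.range (n + 1))
    (fun g _ => Finset.mem_range.mpr (Nat.lt_succ_iff.mpr (fr_le g)))]
  refine Finset.sum_congr rfl fun j hj => ?_
  have hj' : j ≤ n := Nat.lt_succ_iff.mp (Finset.mem_range.mp hj)
  rw [← Fintype.card_subtype, Fintype.card_congr (fiberEquiv j hj'), Fintype.card_prod]

theorem cardG (n : ℕ) : Fintype.card (Gfun n) = catalan n := by
  induction n using Nat.strong_induction_on with
  | _ n ih =>
    match n with
    | 0 =>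
      rw [catalan_zero]
      exact cardG_zero
    | n + 1 =>
      rw [cardG_succ, catalan_succ,
        Fin.sum_univ_eq_sum_range (fun i => catalan i * catalan (n - i))]
      refine Finset.sum_congr rfl fun j hj => ?_
      have hj' : j ≤ n := Nat.lt_succ_iff.mp (Finset.mem_range.mp hj)
      rw [ih j (by omega), ih (n - j) (by omega)]

end Gfun

/-- The staircase Young diagram with row lengths `(m, m-1, ..., 2, 1)`:
its cells are the pairs `(i, j)` with `i + j < m`. -/
def staircase (m : ℕ) : YoungDiagram where
  cells := (Finset.range m ×ˢ Finset.range m).filter (fun p => p.1 + p.2 < m)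
  isLowerSet := by
    intro p q hle hp
    simp only [Finset.mem_coe, Finset.mem_filter, Finset.mem_product,
      Finset.mem_range] at hp ⊢
    obtain ⟨h1, h2⟩ := hle
    omega

lemma mem_staircase {m i j : ℕ} : (i, j) ∈ staircase m ↔ i + j < m := by
  rw [← YoungDiagram.mem_cells]
  simp only [staircase, Finset.mem_filter, Finset.mem_product, Finset.mem_range]
  omega

lemma rowLen_staircase (m i : ℕ) : (staircase m).rowLen i = m - i := by
  rcases Nat.lt_or_ge (m - i) ((staircase m).rowLen i) with h | h
  · exfalso
    have := YoungDiagram.mem_iff_lt_rowLen.mpr (show m - i < (staircase m).rowLen i from h)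
    rw [mem_staircase] at this
    omega
  · rcases Nat.eq_or_lt_of_le h with h2 | h2
    · omega
    · exfalso
      have : (i, (staircase m).rowLen i) ∈ staircase m := mem_staircase.mpr (by omega)
      rw [YoungDiagram.mem_iff_lt_rowLen] at this
      omega

lemma rowLen_le_of_le {μ ν : YoungDiagram} (h : μ ≤ ν) (i : ℕ) : μ.rowLen i ≤ ν.rowLen i := by
  by_contra hc
  push_neg at hc
  have h1 : (i, ν.rowLen i) ∈ μ := YoungDiagram.mem_iff_lt_rowLen.mpr hc
  have h2 : (i, ν.rowLen i) ∈ ν := h h1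
  rw [YoungDiagram.mem_iff_lt_rowLen] at h2
  omega

lemma rowLen_eq_of {μ : YoungDiagram} {i r : ℕ} (h : ∀ j, (i, j) ∈ μ ↔ j < r) :
    μ.rowLen i = r := by
  rcases Nat.lt_trichotomy (μ.rowLen i) r with h1 | h1 | h1
  · exfalso
    have := (h (r - 1)).mpr (by omega)
    rw [YoungDiagram.mem_iff_lt_rowLen] at this
    omega
  · exact h1
  · exfalso
    have := (h r).mp (YoungDiagram.mem_iff_lt_rowLen.mpr h1)
    omega

namespace Gfun

variable {m : ℕ}

/-- The Young diagram associated to a `Gfun`. -/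
def toDiagram (m : ℕ) (g : Gfun (m + 1)) : YoungDiagram where
  cells := (Finset.range (m + 1) ×ˢ Finset.range (m + 1)).filter
    (fun p => p.2 + gg g p.1 < m + 1)
  isLowerSet := by
    intro p q hle hp
    simp only [Finset.mem_coe, Finset.mem_filter, Finset.mem_product, Finset.mem_range] at hp ⊢
    obtain ⟨h1, h2⟩ := hle
    have h3 := gg_mono g (show q.1 ≤ p.1 from h1)
    omega

lemma mem_toDiagram (g : Gfun (m + 1)) (i j : ℕ) :
    (i, j) ∈ toDiagram m g ↔ j + gg g i < m + 1 := by
  rw [← YoungDiagram.mem_cells]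
  simp only [toDiagram, Finset.mem_filter, Finset.mem_product, Finset.mem_range]
  have := lt_gg g i
  omega

lemma rowLen_toDiagram (g : Gfun (m + 1)) (i : ℕ) :
    (toDiagram m g).rowLen i = m + 1 - gg g i := by
  refine rowLen_eq_of fun j => ?_
  rw [mem_toDiagram]
  omega

lemma toDiagram_le (g : Gfun (m + 1)) : toDiagram m g ≤ staircase m := by
  intro p hp
  obtain ⟨i, j⟩ := p
  rw [mem_toDiagram] at hp
  have := lt_gg g i
  rw [mem_staircase]
  omega

/-- The `Gfun` associated to a subdiagram of the staircase. -/
def ofDiagram (m : ℕ) (μ : {μ : YoungDiagram // μ ≤ staircase m}) : Gfun (m + 1) :=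
  ⟨fun i => ⟨m + 1 - μ.1.rowLen i, by omega⟩,
    by
      intro a b hab
      have := μ.1.rowLen_anti a b (show (a : ℕ) ≤ (b : ℕ) from hab)
      simp only
      omega,
    by
      intro a
      have h1 : μ.1.rowLen a ≤ (staircase m).rowLen a := rowLen_le_of_le μ.2 a
      rw [rowLen_staircase] at h1
      have := a.is_lt
      simp only
      omega⟩

lemma gg_ofDiagram (μ : {μ : YoungDiagram // μ ≤ staircase m}) {i : ℕ} (h : i < m + 1) :
    gg (ofDiagram m μ) i = m + 1 - μ.1.rowLen i := by
  rw [gg, dif_pos h]; rfl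

lemma gg_ofDiagram_ge (μ : {μ : YoungDiagram // μ ≤ staircase m}) {i : ℕ} (h : ¬ i < m + 1) :
    gg (ofDiagram m μ) i = i + 1 := by
  rw [gg, dif_neg h]

/-- The equivalence between subdiagrams of the staircase and `Gfun`s. -/
def diagEquiv (m : ℕ) : {μ : YoungDiagram // μ ≤ staircase m} ≃ Gfun (m + 1) where
  toFun := ofDiagram m
  invFun g := ⟨toDiagram m g, toDiagram_le g⟩
  left_inv μ := by
    apply Subtype.ext
    apply YoungDiagram.ext  -- cells equal
    ext ⟨i, j⟩
    rw [YoungDiagram.mem_cells, YoungDiagram.mem_cells, mem_toDiagram]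
    have h1 : μ.1.rowLen i ≤ (staircase m).rowLen i := rowLen_le_of_le μ.2 i
    rw [rowLen_staircase] at h1
    rw [YoungDiagram.mem_iff_lt_rowLen]
    rcases Nat.lt_or_ge i (m + 1) with h | h
    · rw [gg_ofDiagram μ h]
      omega
    · rw [gg_ofDiagram_ge μ (by omega)]
      omega
  right_inv g := by
    apply Subtype.ext
    funext i
    apply Fin.ext
    show m + 1 - (toDiagram m g).rowLen i = (g.1 i : ℕ)
    rw [rowLen_toDiagram]
    have h1 : gg g i = (g.1 i : ℕ) := by
      rw [gg, dif_pos i.is_lt]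
    have h2 := gg_le g i (Nat.lt_succ_iff.mp i.is_lt)
    have h3 := lt_gg g i
    omega

end Gfun

/-- The number of binary trees with `n` internal nodes (full binary trees with `n+1`
leaves) equals the number of Young diagrams contained in the staircase `S(n-1)`. -/
theorem card_binaryTrees_eq_card_subdiagrams_staircase (n : ℕ) (hn : 1 ≤ n) :
    (Tree.treesOfNumNodesEq n).card =
      Nat.card {μ : YoungDiagram // μ ≤ staircase (n - 1)} := by
  obtain ⟨m, rfl⟩ : ∃ m, n = m + 1 := ⟨n - 1, by omega⟩
  have h1 : m + 1 - 1 = m := by omega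
  rw [h1, Nat.card_congr (Gfun.diagEquiv m), Nat.card_eq_fintype_card, Gfun.cardG,
    BinaryTree.treesOfNumNodesEq_card_eq_catalan]
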